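/- Let n ≥ 5 and let I be a squarefree strongly stable ideal of S = K[x_1,…,x_n] of initial degree 2 having a corner in degree 2 (i.e. (k,2) ∈ C(I) for some positive integer k). Then I has at most n−3 corners, i.e. |C(I)| ≤ n−3. -/

import Mathlib

open Finset

noncomputable section

/-- `m(u)`: the maximal index in the support of a squarefree monomial `u`,
where a squarefree monomial of `K[x_1,…,x_n]` is identified with its support,
a finite set of variable indices (`m(1) = 0`). -/
def mmax (u : Finset ℕ) : ℕ := u.sup id

/-- A squarefree monomial ideal of `K[x_1,…,x_n]`, identified with the (finite) set of
squarefree monomials belonging to it: it is upward closed under divisibility of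
squarefree monomials, i.e. under taking supersets inside `{1,…,n}`. -/
def IsSqIdeal (n : ℕ) (I : Finset (Finset ℕ)) : Prop :=
  (∀ u ∈ I, u ⊆ Finset.Icc 1 n) ∧
    ∀ u ∈ I, ∀ v, u ⊆ v → v ⊆ Finset.Icc 1 n → v ∈ I

/-- `G(I)`: the minimal monomial generators of a squarefree monomial ideal. -/
def gens (I : Finset (Finset ℕ)) : Finset (Finset ℕ) :=
  I.filter fun u => ∀ v ∈ I, v ⊆ u → v = u

/-- `G(I)_ℓ`: the degree-`ℓ` minimal generators. -/
def gensDeg (I : Finset (Finset ℕ)) (l : ℕ) : Finset (Finset ℕ) :=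
  (gens I).filter fun u => u.card = l

/-- The graded Betti number `β_{k,k+ℓ}(I)` of a squarefree stable ideal, given by the
Aramova–Herzog–Hibi formula (taken as the definition). -/
def betti (I : Finset (Finset ℕ)) (k l : ℕ) : ℕ :=
  ∑ u ∈ gensDeg I l, (mmax u - l).choose k

/-- `β_{k,k+ℓ}(I)` is an extremal Betti number. -/
def IsExtremal (I : Finset (Finset ℕ)) (k l : ℕ) : Prop :=
  betti I k l ≠ 0 ∧ ∀ i j, k ≤ i → l ≤ j → (i, j) ≠ (k, l) → betti I i j = 0

/-- `C(I)`: the set of corners of `I`. -/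
def corners (I : Finset (Finset ℕ)) : Set (ℕ × ℕ) :=
  {p | IsExtremal I p.1 p.2}

/-- squarefree stable ideal. -/
def IsSqStable (n : ℕ) (I : Finset (Finset ℕ)) : Prop :=
  IsSqIdeal n I ∧
    ∀ u ∈ gens I, ∀ j, 1 ≤ j → j < mmax u → j ∉ u →
      insert j (u.erase (mmax u)) ∈ I

/-- squarefree strongly stable ideal. -/
def IsSqStronglyStable (n : ℕ) (I : Finset (Finset ℕ)) : Prop :=
  IsSqIdeal n I ∧
    ∀ u ∈ gens I, ∀ i ∈ u, ∀ j, 1 ≤ j → j < i → j ∉ u →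
      insert j (u.erase i) ∈ I

/-- `u >_slex v` for squarefree monomials of the same degree: at the first position where
the increasing index sequences differ, `u` has the smaller index; equivalently the least
element of the symmetric difference belongs to `u`. -/
def slexGT (u v : Finset ℕ) : Prop :=
  u ≠ v ∧ sInf {a : ℕ | a ∈ symmDiff u v} ∈ u

/-- `u ≥_slex v`. -/
def slexGE (u v : Finset ℕ) : Prop := u = v ∨ slexGT u v

/-- `A^s(k,ℓ)`: the squarefree monomials of `K[x_1,…,x_n]` of degree `ℓ` with `m(u) = k+ℓ`. -/
def Asf (n k l : ℕ) : Finset (Finset ℕ) :=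
  (Finset.Icc 1 n).powerset.filter fun u => u.card = l ∧ mmax u = k + l

/-- The set of gaps of a squarefree monomial `u`, recorded by the element of `u`
immediately preceding each gap. -/
def gapSet (u : Finset ℕ) : Finset ℕ :=
  u.filter fun a => a < mmax u ∧ a + 1 ∉ u

/-- The width of the gap of `u` starting right after `a`. -/
def gapWidth (u : Finset ℕ) (a : ℕ) : ℕ :=
  sInf {b : ℕ | b ∈ u ∧ a < b} - a - 1

/-- The squarefree shadow of a set `T` of squarefree monomials:
`Shad(T) = {x_i u : u ∈ T, i ∉ supp u, i = 1,…,n}`. -/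
def shadS (n : ℕ) (T : Set (Finset ℕ)) : Set (Finset ℕ) :=
  {v | ∃ u ∈ T, ∃ i, i ∈ Finset.Icc 1 n ∧ i ∉ u ∧ v = insert i u}

/-- A squarefree strongly stable set of squarefree monomials. -/
def IsSSSetS (T : Set (Finset ℕ)) : Prop :=
  ∀ u ∈ T, ∀ i ∈ u, ∀ j, 1 ≤ j → j < i → j ∉ u → insert j (u.erase i) ∈ T

/-- Membership in `B(u_1,…,u_r)`, the smallest squarefree strongly stable set
containing the monomials of `U`. -/
inductive BMem (U : Finset (Finset ℕ)) : Finset ℕ → Prop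
  | base : ∀ u ∈ U, BMem U u
  | step : ∀ u, BMem U u → ∀ i ∈ u, ∀ j, 1 ≤ j → j < i → j ∉ u →
      BMem U (insert j (u.erase i))

/-- `BShad(u_1,…,u_r)_{(k₂,ℓ₂)}` for monomials `u_1,…,u_r` of degree `ℓ₁`:
the elements of `Shad^{ℓ₂-ℓ₁}(B(u_1,…,u_r))` with `m(v) ≤ k₂+ℓ₂`. -/
def bshad (n l1 k2 l2 : ℕ) (U : Finset (Finset ℕ)) : Set (Finset ℕ) :=
  {v | v ∈ (shadS n)^[l2 - l1] {u | BMem U u} ∧ mmax v ≤ k2 + l2}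

/-- squarefree lexsegment ideal. -/
def IsSqLex (n : ℕ) (I : Finset (Finset ℕ)) : Prop :=
  IsSqIdeal n I ∧
    ∀ u ∈ I, ∀ v, v ⊆ Finset.Icc 1 n → v.card = u.card → slexGT v u → v ∈ I

/-! Corners form an antichain, so both their first coordinates, which lie in `[1, n-2]`, and
their degrees, which lie in `[2, n-1]`, are pairwise distinct. With `n - 2` corners every value is
attained. The corner `(n-2, 2)` comes from a quadratic generator divisible by `x_n`; by strong
stability `x_1 x_j ∈ I` for every `j`, so no generator of degree at least `3` involves `x_1`.
Then the degree-`(n-1)` generator is `x_2 ⋯ x_n`, and it is divisible by the degree-`3`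
generator, contradicting minimality since `3 < n - 1`. -/

lemma Set.exists_mem_eq_of_injOn_of_card_le {α β : Type*} {s : Set α} {t : Finset β}
    {f : α → β} (hf : Set.MapsTo f s t) (hinj : Set.InjOn f s) (hcard : t.card ≤ s.ncard)
    {b : β} (hb : b ∈ t) : ∃ a ∈ s, f a = b := by
  obtain ⟨a, ha, rfl⟩ := Set.surj_on_of_inj_on_of_ncard_le (fun a _ => f a) hf
    (fun _ _ ha ha' => hinj ha ha') (by simpa using hcard) t.finite_toSet b hb
  exact ⟨a, ha, rfl⟩

section Corners

variable {n : ℕ} {I : Finset (Finset ℕ)} {u : Finset ℕ}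

lemma mem_gens_iff : u ∈ gens I ↔ u ∈ I ∧ ∀ v ∈ I, v ⊆ u → v = u := by
  simp [gens]

lemma exists_mem_gens_subset (hu : u ∈ I) : ∃ g ∈ gens I, g ⊆ u := by
  obtain ⟨g, hgu, hg⟩ := exists_minimal_le_of_wellFoundedLT (· ∈ I) u hu
  exact ⟨g, mem_gens_iff.2 ⟨hg.1, fun v hv hvg => le_antisymm hvg (hg.2 hv hvg)⟩, hgu⟩

lemma le_mmax {a : ℕ} (ha : a ∈ u) : a ≤ mmax u :=
  Finset.le_sup (f := id) ha

lemma subset_Icc_mmax (h0 : 0 ∉ u) : u ⊆ Icc 1 (mmax u) := fun _ ha =>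
  mem_Icc.2 ⟨Nat.one_le_iff_ne_zero.2 (ne_of_mem_of_not_mem ha h0), le_mmax ha⟩

lemma card_le_mmax (h0 : 0 ∉ u) : u.card ≤ mmax u := by
  simpa using card_le_card (subset_Icc_mmax h0)

lemma eq_Icc_mmax_of_mmax_le_card (h0 : 0 ∉ u) (h : mmax u ≤ u.card) :
    u = Icc 1 (mmax u) :=
  eq_of_subset_of_card_le (subset_Icc_mmax h0) (by simpa using h)

lemma IsSqIdeal.zero_notMem (hI : IsSqIdeal n I) (hu : u ∈ I) : 0 ∉ u := fun h =>
  by simpa using hI.1 u hu h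

lemma IsSqIdeal.mmax_le (hI : IsSqIdeal n I) (hu : u ∈ I) : mmax u ≤ n :=
  Finset.sup_le fun _ ha => (mem_Icc.1 (hI.1 u hu ha)).2

/-- Strong stability, imposed on the generators only, holds for every monomial of the ideal. -/
lemma IsSqStronglyStable.insert_erase_mem (hI : IsSqStronglyStable n I) (hu : u ∈ I)
    {i j : ℕ} (hi : i ∈ u) (hj : 1 ≤ j) (hji : j < i) (hju : j ∉ u) :
    insert j (u.erase i) ∈ I := by
  obtain ⟨g, hg, hgu⟩ := exists_mem_gens_subset hu
  have hsub : insert j (u.erase i) ⊆ Icc 1 n := by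
    refine insert_subset (mem_Icc.2 ⟨hj, ?_⟩) ((erase_subset i u).trans (hI.1.1 u hu))
    exact hji.le.trans (mem_Icc.1 (hI.1.1 u hu hi)).2
  by_cases hig : i ∈ g
  · exact hI.1.2 _ (hI.2 g hg i hig j hj hji fun h => hju (hgu h)) _
      (insert_subset_insert _ (erase_subset_erase _ hgu)) hsub
  · refine hI.1.2 g (mem_gens_iff.1 hg).1 _ (fun a ha => ?_) hsub
    exact mem_insert_of_mem (mem_erase.2 ⟨ne_of_mem_of_not_mem ha hig, hgu ha⟩)

lemma IsSqStronglyStable.pair_mem_of_le (hI : IsSqStronglyStable n I) {a b c d : ℕ}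
    (h : ({a, b} : Finset ℕ) ∈ I) (hab : a < b) (hc : 1 ≤ c) (hcd : c < d) (hca : c ≤ a)
    (hdb : d ≤ b) : ({c, d} : Finset ℕ) ∈ I := by
  have hcb : ({c, b} : Finset ℕ) ∈ I := by
    rcases hca.eq_or_lt with rfl | hca
    · exact h
    · convert hI.insert_erase_mem h (i := a) (by simp) hc hca (by simp; omega) using 1
      ext x; simp; omega
  rcases hdb.eq_or_lt with rfl | hdb
  · exact hcb
  · convert hI.insert_erase_mem hcb (i := b) (by simp) (by omega) hdb (by simp; omega) using 1
    ext x; simp; omega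

lemma IsSqStronglyStable.pair_one_two_mem (hI : IsSqStronglyStable n I)
    (hindeg' : ∃ u ∈ I, u.card = 2) : ({1, 2} : Finset ℕ) ∈ I := by
  obtain ⟨u, hu, hc⟩ := hindeg'
  obtain ⟨a, b, hab, rfl⟩ := card_eq_two.1 hc
  have h0 := hI.1.zero_notMem hu
  simp only [mem_insert, mem_singleton, not_or] at h0
  rcases hab.lt_or_gt with hab | hab
  · exact hI.pair_mem_of_le hu hab le_rfl one_lt_two (by omega) (by omega)
  · exact hI.pair_mem_of_le (pair_comm a b ▸ hu) hab le_rfl one_lt_two (by omega) (by omega)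

lemma betti_ne_zero_iff {k l : ℕ} :
    betti I k l ≠ 0 ↔ ∃ u ∈ gens I, u.card = l ∧ k ≤ mmax u - l := by
  simp [betti, gensDeg, sum_eq_zero_iff, Nat.choose_eq_zero_iff]

lemma IsSqIdeal.add_le_of_betti_ne_zero (hI : IsSqIdeal n I) {k l : ℕ}
    (h : betti I k l ≠ 0) : k + l ≤ n := by
  obtain ⟨u, hu, rfl, hk⟩ := betti_ne_zero_iff.1 h
  have huI := (mem_gens_iff.1 hu).1
  have := card_le_mmax (hI.zero_notMem huI)
  have := hI.mmax_le huI
  omega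

lemma le_of_betti_ne_zero {d k l : ℕ} (hindeg : ∀ u ∈ I, d ≤ u.card) (h : betti I k l ≠ 0) :
    d ≤ l := by
  obtain ⟨u, hu, rfl, -⟩ := betti_ne_zero_iff.1 h
  exact hindeg u (mem_gens_iff.1 hu).1

lemma eq_of_mem_corners_of_le {p q : ℕ × ℕ} (hp : p ∈ corners I) (hq : q ∈ corners I)
    (h1 : p.1 ≤ q.1) (h2 : p.2 ≤ q.2) : p = q := by
  by_contra hne
  exact hq.1 (hp.2 q.1 q.2 h1 h2 (Ne.symm hne))

lemma injOn_fst_corners : Set.InjOn Prod.fst (corners I) := fun p hp q hq h =>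
  eq_of_mem_corners_of_le hp hq h.le (by
    by_contra! hlt
    exact absurd (eq_of_mem_corners_of_le hq hp h.ge hlt.le) (by grind))

lemma injOn_snd_corners : Set.InjOn Prod.snd (corners I) := fun p hp q hq h =>
  eq_of_mem_corners_of_le hp hq (by
    by_contra! hlt
    exact absurd (eq_of_mem_corners_of_le hq hp hlt.le h.ge) (by grind)) h.le

/-- A generator `u` with `m(u) = deg u` is `x_1 ⋯ x_ℓ`, which `x_1 x_2 ∈ I` rules out
in degree `ℓ ≥ 3`. -/
lemma IsSqIdeal.card_lt_mmax_of_mem_gens (hI : IsSqIdeal n I) (h12 : ({1, 2} : Finset ℕ) ∈ I)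
    (hu : u ∈ gens I) (hc : 3 ≤ u.card) : u.card < mmax u := by
  by_contra! hle
  have hIcc := eq_Icc_mmax_of_mmax_le_card (hI.zero_notMem (mem_gens_iff.1 hu).1) hle
  have hmax := card_le_mmax (hI.zero_notMem (mem_gens_iff.1 hu).1)
  have h12u : ({1, 2} : Finset ℕ) ⊆ u := by
    rw [hIcc]; intro a; simp only [mem_insert, mem_singleton, mem_Icc]; omega
  have := congrArg card ((mem_gens_iff.1 hu).2 _ h12 h12u)
  rw [card_pair (by norm_num)] at this
  omega

lemma IsSqIdeal.one_le_fst_of_mem_corners (hI : IsSqIdeal n I) (hindeg : ∀ u ∈ I, 2 ≤ u.card)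
    (h12 : ({1, 2} : Finset ℕ) ∈ I) (hcor : ∃ k : ℕ, 1 ≤ k ∧ (k, 2) ∈ corners I)
    {p : ℕ × ℕ} (hp : p ∈ corners I) : 1 ≤ p.1 := by
  by_contra! h0
  rcases (le_of_betti_ne_zero hindeg hp.1).eq_or_lt with h2 | h3
  · obtain ⟨k, hk, hkc⟩ := hcor
    have := eq_of_mem_corners_of_le hp hkc (by omega) h2.ge
    grind
  · obtain ⟨u, hu, hc, -⟩ := betti_ne_zero_iff.1 hp.1
    have := hI.card_lt_mmax_of_mem_gens h12 hu (by omega)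
    exact betti_ne_zero_iff.2 ⟨u, hu, hc, by omega⟩ (hp.2 1 p.2 (by omega) le_rfl (by grind))

lemma IsSqStronglyStable.subset_Icc_two_of_mem_gens (hI : IsSqStronglyStable n I)
    (h1n : ({1, n} : Finset ℕ) ∈ I) (hu : u ∈ gens I) (hc : 3 ≤ u.card) : u ⊆ Icc 2 n := by
  intro a ha
  have ha' := mem_Icc.1 (hI.1.1 u (mem_gens_iff.1 hu).1 ha)
  refine mem_Icc.2 ⟨?_, ha'.2⟩
  by_contra! ha1
  obtain ⟨x, hx, hxa⟩ := exists_mem_ne (s := u) (by omega) a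
  have hx' := mem_Icc.1 (hI.1.1 u (mem_gens_iff.1 hu).1 hx)
  have h1x := hI.pair_mem_of_le h1n (c := 1) (d := x) (by omega) le_rfl (by omega) le_rfl hx'.2
  have := congrArg card ((mem_gens_iff.1 hu).2 _ h1x (by
    intro b; simp only [mem_insert, mem_singleton]
    rintro (rfl | rfl)
    · exact (show a = 1 by omega) ▸ ha
    · exact hx))
  rw [card_pair (by omega)] at this
  omega

lemma IsSqStronglyStable.pair_one_n_mem_of_mem_corners (hI : IsSqStronglyStable n I)
    {p : ℕ × ℕ} (hp : p ∈ corners I) (h2 : p.2 = 2) (hn : n ≤ p.1 + p.2) :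
    ({1, n} : Finset ℕ) ∈ I := by
  obtain ⟨u, hu, hc, hk⟩ := betti_ne_zero_iff.1 hp.1
  have huI := (mem_gens_iff.1 hu).1
  obtain ⟨a, b, hab, rfl⟩ := card_eq_two.1 (hc.trans h2)
  have hmax := hI.1.mmax_le huI
  have hsub := hI.1.1 _ huI
  simp only [insert_subset_iff, singleton_subset_iff, mem_Icc] at hsub
  have hab' : max a b = mmax {a, b} := by simp [mmax]
  rcases hab.lt_or_gt with hab | hab
  · exact hI.pair_mem_of_le huI hab le_rfl (by omega) (by omega) (by omega)
  · exact hI.pair_mem_of_le (pair_comm a b ▸ huI) hab le_rfl (by omega) (by omega) (by omega)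

end Corners

/-- for `n ≥ 5`, a squarefree strongly stable ideal of `K[x_1,…,x_n]` of
initial degree `2` with a corner in degree `2` has at most `n-3` corners. -/
theorem corners_le_of_indeg_two (n : ℕ) (hn : 5 ≤ n) (I : Finset (Finset ℕ))
    (hI : IsSqStronglyStable n I)
    (hindeg : ∀ u ∈ I, 2 ≤ u.card) (hindeg' : ∃ u ∈ I, u.card = 2)
    (hcor : ∃ k : ℕ, 1 ≤ k ∧ (k, 2) ∈ corners I) :
    (corners I).Finite ∧ (corners I).ncard ≤ n - 3 := by
  have h12 := hI.pair_one_two_mem hindeg'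
  have hshape : ∀ p ∈ corners I, 1 ≤ p.1 ∧ 2 ≤ p.2 ∧ p.1 + p.2 ≤ n := fun p hp =>
    ⟨hI.1.one_le_fst_of_mem_corners hindeg h12 hcor hp, le_of_betti_ne_zero hindeg hp.1,
      hI.1.add_le_of_betti_ne_zero hp.1⟩
  have hfst : Set.MapsTo Prod.fst (corners I) (Icc 1 (n - 2)) := fun p hp => by
    have := hshape p hp; simp; omega
  have hsnd : Set.MapsTo Prod.snd (corners I) (Icc 2 (n - 1)) := fun p hp => by
    have := hshape p hp; simp; omega
  have hfin : (corners I).Finite := Set.Finite.of_finite_image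
    ((finite_toSet _).subset (Set.mapsTo_iff_image_subset.1 hfst)) injOn_fst_corners
  refine ⟨hfin, ?_⟩
  by_contra! hlt
  obtain ⟨p, hp, hp1⟩ := Set.exists_mem_eq_of_injOn_of_card_le hfst injOn_fst_corners
    (by simp; omega) (b := n - 2) (by simp; omega)
  obtain ⟨q, hq, hq2⟩ := Set.exists_mem_eq_of_injOn_of_card_le hsnd injOn_snd_corners
    (by simp; omega) (b := n - 1) (by simp; omega)
  obtain ⟨r, hr, hr2⟩ := Set.exists_mem_eq_of_injOn_of_card_le hsnd injOn_snd_corners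
    (by simp; omega) (b := 3) (by simp; omega)
  have h1n := hI.pair_one_n_mem_of_mem_corners hp (by grind) (by grind)
  obtain ⟨v, hv, hvc, -⟩ := betti_ne_zero_iff.1 hq.1
  obtain ⟨w, hw, hwc, -⟩ := betti_ne_zero_iff.1 hr.1
  have hv' : v = Icc 2 n := eq_of_subset_of_card_le
    (hI.subset_Icc_two_of_mem_gens h1n hv (by omega)) (by simp; omega)
  have hwv := (mem_gens_iff.1 hv).2 w (mem_gens_iff.1 hw).1
    (hv' ▸ hI.subset_Icc_two_of_mem_gens h1n hw (by omega))
  grind
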